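/- Let G be a simple graph whose complement contains no induced cycle on 5 or more vertices, and let {u,v} be an edge of G. If the complement of G − {u,v} contains an induced cycle on k ≥ 5 vertices, then the complement of G contains an induced (chordless) path on k vertices whose endpoints are u and v. -/

import Mathlib

open SimpleGraph
open Fin.CommRing

private lemma cycA {m : ℕ} {a b : Fin (m+5)} :
    (cycleGraph (m+5)).Adj a b ↔ b = a + 1 ∨ a = b + 1 := by
  rw [cycleGraph_adj']
  have h1 : (1 : Fin (m+5)).val = 1 := rfl
  constructor
  · rintro (h | h)
    · right
      have : a - b = 1 := Fin.ext (by simpa using h)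
      rw [← this]; ring
    · left
      have : b - a = 1 := Fin.ext (by simpa using h)
      rw [← this]; ring
  · rintro (rfl | rfl)
    · right; rw [add_sub_cancel_left]; exact h1
    · left; rw [add_sub_cancel_left]; exact h1

private lemma Hadj {V : Type*} {G : SimpleGraph V} {u v x y : V} :
    (G.deleteEdges {s(u,v)})ᶜ.Adj x y ↔
      x ≠ y ∧ (¬ G.Adj x y ∨ (x = u ∧ y = v) ∨ (x = v ∧ y = u)) := by
  simp only [compl_adj, deleteEdges_adj, Set.mem_singleton_iff, Sym2.eq, Sym2.rel_iff',
    Prod.mk.injEq, Prod.swap_prod_mk]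
  tauto

private lemma build_path {V : Type*} {G : SimpleGraph V} {u v : V} (huv : G.Adj u v)
    {m : ℕ} (f : Fin (m+5) → V) (hinj : Function.Injective f)
    (hf : ∀ a b : Fin (m+5),
      (G.deleteEdges {s(u,v)})ᶜ.Adj (f a) (f b) ↔ (b = a + 1 ∨ a = b + 1))
    (h0 : f 0 = u) (h1 : f (-1) = v) :
    ∃ F : pathGraph (m+5) ↪g Gᶜ,
      F ⟨0, by omega⟩ = u ∧ F ⟨m+5-1, by omega⟩ = v := by
  have hneg : ((-1 : Fin (m+5))).val = m + 4 := Fin.coe_neg_one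
  have v1 : (1 : Fin (m+5)).val = 1 := rfl
  have hadd : ∀ a : Fin (m+5), (a + 1).val = if a.val = m+4 then 0 else a.val + 1 := by
    intro a
    rw [Fin.val_add, v1]
    split_ifs with h
    · rw [h]; have : m+4+1 = m+5 := rfl; rw [this, Nat.mod_self]
    · have := a.isLt; exact Nat.mod_eq_of_lt (by omega)
  have fwd : ∀ a b : Fin (m+5), b = a + 1 → Gᶜ.Adj (f a) (f b) → a.val + 1 = b.val := by
    intro a b hb hadj
    have hb' := congrArg Fin.val hb
    rw [hadd] at hb'
    rcases eq_or_ne a.val (m+4) with h | h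
    · exfalso
      rw [if_pos h] at hb'
      have ha1 : a = -1 := Fin.ext (by rw [hneg]; exact h)
      have hb0 : b = 0 := Fin.ext hb'
      rw [ha1, hb0, h1, h0, compl_adj] at hadj
      exact hadj.2 huv.symm
    · rw [if_neg h] at hb'; omega
  have bwd : ∀ a b : Fin (m+5), a.val + 1 = b.val → Gᶜ.Adj (f a) (f b) := by
    intro a b hab
    have hblt := b.isLt
    have hb : b = a + 1 := by
      refine (Fin.ext ?_).symm
      rw [hadd, if_neg (by omega)]; exact hab
    have hH : (G.deleteEdges {s(u,v)})ᶜ.Adj (f a) (f b) := (hf a b).mpr (Or.inl hb)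
    rw [Hadj] at hH
    rw [compl_adj]
    refine ⟨hH.1, ?_⟩
    rcases hH.2 with h | ⟨hu', hv'⟩ | ⟨hv', hu'⟩
    · exact h
    · exfalso
      have ha0 : a = 0 := hinj (by rw [hu', h0])
      have hbneg : b = -1 := hinj (by rw [hv', h1])
      have h2 : b.val = m+4 := by rw [hbneg]; exact hneg
      have h3 : a.val = 0 := by rw [ha0]; rfl
      omega
    · exfalso
      have hbig : a = -1 := hinj (by rw [hv', h1])
      have : a.val = m+4 := by rw [hbig]; exact hneg
      omega
  refine ⟨⟨⟨f, hinj⟩, ?_⟩, ?_, ?_⟩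
  · intro a b
    simp only [Function.Embedding.coeFn_mk]
    rw [pathGraph_adj]
    constructor
    · intro hGadj
      have hH : (G.deleteEdges {s(u,v)})ᶜ.Adj (f a) (f b) := by
        rw [Hadj]; rw [compl_adj] at hGadj; exact ⟨hGadj.1, Or.inl hGadj.2⟩
      rw [hf] at hH
      rcases hH with hb | hb
      · exact Or.inl (fwd a b hb hGadj)
      · exact Or.inr (fwd b a hb hGadj.symm)
    · rintro (h | h)
      · exact bwd a b h
      · exact (bwd b a h).symm
  · show f ⟨0, _⟩ = u
    rw [show (⟨0, by omega⟩ : Fin (m+5)) = 0 from rfl]; exact h0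
  · show f ⟨m+5-1, _⟩ = v
    rw [show (⟨m+5-1, by omega⟩ : Fin (m+5)) = -1 from Fin.ext (by rw [hneg]; rfl)]; exact h1

/-- Let `G` be a simple graph whose complement contains no induced cycle on 5 or more
vertices, and let `{u,v}` be an edge of `G`.  If the complement of `G − {u,v}` contains an
induced cycle on `k ≥ 5` vertices, then the complement of `G` contains an induced
(chordless) path on `k` vertices whose endpoints are `u` and `v`. -/
theorem antihole_after_edge_deletion_gives_induced_path {V : Type*} (G : SimpleGraph V)
    (hG : ∀ k : ℕ, 5 ≤ k → IsEmpty (SimpleGraph.cycleGraph k ↪g Gᶜ))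
    {u v : V} (huv : G.Adj u v) (k : ℕ) (hk : 5 ≤ k)
    (hhole : Nonempty (SimpleGraph.cycleGraph k ↪g (G.deleteEdges {s(u, v)})ᶜ)) :
    ∃ f : SimpleGraph.pathGraph k ↪g Gᶜ,
      f ⟨0, by omega⟩ = u ∧ f ⟨k - 1, by omega⟩ = v := by
  obtain ⟨m, rfl⟩ : ∃ m, k = m + 5 := ⟨k - 5, by omega⟩
  obtain ⟨g⟩ := hhole
  have key : ∃ i : Fin (m+5), (g i = u ∧ g (i+1) = v) ∨ (g i = v ∧ g (i+1) = u) := by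
    by_contra hcon
    have hne : ∀ i : Fin (m+5),
        ¬((g i = u ∧ g (i+1) = v) ∨ (g i = v ∧ g (i+1) = u)) :=
      fun i h => hcon ⟨i, h⟩
    refine (hG (m+5) (by omega)).false ⟨g.toEmbedding, fun {a b} => ?_⟩
    constructor
    · intro h
      rw [compl_adj] at h
      exact g.map_rel_iff.mp (Hadj.mpr ⟨h.1, Or.inl h.2⟩)
    · intro h
      have hH := g.map_rel_iff.mpr h
      rw [cycA] at h
      rw [Hadj] at hH
      rw [compl_adj]
      refine ⟨hH.1, ?_⟩
      rcases hH.2 with hna | ⟨h1', h2'⟩ | ⟨h1', h2'⟩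
      · exact hna
      · exfalso
        rcases h with hb | hb
        · exact hne a (Or.inl ⟨h1', by rw [← hb]; exact h2'⟩)
        · exact hne b (Or.inr ⟨h2', by rw [← hb]; exact h1'⟩)
      · exfalso
        rcases h with hb | hb
        · exact hne a (Or.inr ⟨h1', by rw [← hb]; exact h2'⟩)
        · exact hne b (Or.inl ⟨h2', by rw [← hb]; exact h1'⟩)
  obtain ⟨i, hcase⟩ := key
  rcases hcase with ⟨hu', hv'⟩ | ⟨hv', hu'⟩
  · apply build_path huv (fun j => g (i - j))
    · exact g.injective.comp sub_right_injective
    · intro a b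
      rw [g.map_rel_iff, cycA]
      constructor
      · rintro (h | h)
        · right; linear_combination h
        · left; linear_combination h
      · rintro (rfl | rfl)
        · right; ring
        · left; ring
    · show g (i - 0) = u; rw [sub_zero]; exact hu'
    · show g (i - (-1)) = v; rw [sub_neg_eq_add]; exact hv'
  · apply build_path huv (fun j => g (i + 1 + j))
    · exact g.injective.comp (add_right_injective (i+1))
    · intro a b
      rw [g.map_rel_iff, cycA]
      constructor
      · rintro (h | h)
        · left; linear_combination h
        · right; linear_combination h
      · rintro (rfl | rfl)
        · left; ring
        · right; ring
    · show g (i + 1 + 0) = u; rw [add_zero]; exact hu'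
    · show g (i + 1 + (-1)) = v; rw [show i + 1 + (-1) = i by ring]; exact hv'
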